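/- arXiv:2107.07371 — 2 statements merged into one kernel-verified Lean document; each statement's English description precedes it below -/
import Mathlib

section
/- Let $\mu_j = C j^{-2\ell}$ for some constants $C > 0$ and $\ell \geq 1$. Then for every $\lambda > 0$, the effective dimension $\gamma(\lambda) = \sum_{j=1}^{\infty} \mu_j/(\mu_j + \lambda)$ satisfies $\gamma(\lambda) \leq C' \lambda^{-1/(2\ell)}$ for some constant $C'$ depending only on $C$ and $\ell$. -/
/-!
Each term satisfies `μ_j / (μ_j + λ) ≤ min 1 (μ_j / λ) = min 1 ((a / (j + 1)) ^ s)` with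
`s = 2ℓ` and `a = (C / λ) ^ (1 / s)`. The first `⌊a⌋` terms contribute at most `a`; the
remaining ones are compared with `a ^ s ∫_{⌊a⌋+1}^∞ t ^ (-s) dt`, which is of order
`a ^ s · a ^ (1 - s) = a`. Hence `γ(λ) ≲ a`, a constant times `λ ^ (-1 / s)`.
-/

open Finset Real

lemma sum_range_rpow_neg_add_succ_le {s x : ℝ} (hs : 1 < s) (hx : 0 < x) (n : ℕ) :
    ∑ i ∈ range n, (x + (i + 1)) ^ (-s) ≤ x ^ (1 - s) / (s - 1) := by
  have hanti : AntitoneOn (fun t : ℝ => t ^ (-s)) (Set.Icc x (x + n)) :=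
    fun t ht u _ htu => rpow_le_rpow_of_nonpos (hx.trans_le ht.1) htu (by linarith)
  have hzero : (0 : ℝ) ∉ Set.uIcc x (x + n) := by
    rw [Set.uIcc_of_le (by simp)]
    exact fun h => hx.not_ge h.1
  calc ∑ i ∈ range n, (x + (i + 1)) ^ (-s)
      ≤ ∫ t in x..x + n, t ^ (-s) := by exact_mod_cast hanti.sum_le_integral
    _ = (x ^ (1 - s) - (x + n) ^ (1 - s)) / (s - 1) := by
      rw [integral_rpow (Or.inr ⟨by linarith, hzero⟩), show -s + 1 = 1 - s by ring,
        ← neg_div_neg_eq, neg_sub, neg_sub]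
    _ ≤ x ^ (1 - s) / (s - 1) := by
      gcongr
      exact sub_le_self _ (by positivity)

lemma sum_range_rpow_neg_add_le {s x : ℝ} (hs : 1 < s) (hx : 1 ≤ x) (n : ℕ) :
    ∑ i ∈ range n, (x + i) ^ (-s) ≤ s / (s - 1) * x ^ (1 - s) := by
  have hx0 : 0 < x := by linarith
  have hs1 : s - 1 ≠ 0 := by linarith
  cases n with
  | zero => simp only [range_zero, sum_empty]; positivity
  | succ n =>
    have hfirst : x ^ (-s) ≤ x ^ (1 - s) := rpow_le_rpow_of_exponent_le hx (by linarith)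
    have htail := sum_range_rpow_neg_add_succ_le hs hx0 n
    rw [sum_range_succ']
    push_cast
    calc _ ≤ x ^ (1 - s) / (s - 1) + x ^ (1 - s) := by rw [add_zero]; exact add_le_add htail hfirst
      _ = s / (s - 1) * x ^ (1 - s) := by field_simp; ring

lemma sum_range_min_one_div_rpow_le {s a : ℝ} (hs : 1 < s) (ha : 0 < a) (n : ℕ) :
    ∑ j ∈ range n, min 1 ((a / (j + 1)) ^ s) ≤ (1 + s / (s - 1)) * a := by
  set N := ⌊a⌋₊
  have hN : (N : ℝ) ≤ a := Nat.floor_le ha.le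
  have hN1 : a ≤ N + 1 := (Nat.lt_floor_add_one a).le
  have hhead : ∑ j ∈ range N, min 1 ((a / (j + 1)) ^ s) ≤ N :=
    (sum_le_sum fun j _ => min_le_left _ _).trans (by simp)
  have htail : ∑ i ∈ range n, min 1 ((a / ((N + i : ℕ) + 1)) ^ s)
      ≤ a ^ s * (s / (s - 1) * ((N : ℝ) + 1) ^ (1 - s)) := by
    calc _ ≤ ∑ i ∈ range n, a ^ s * ((N + 1 : ℝ) + i) ^ (-s) := by
          refine sum_le_sum fun i _ => (min_le_right _ _).trans_eq ?_
          rw [div_rpow ha.le (by positivity), rpow_neg (by positivity), div_eq_mul_inv]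
          push_cast
          ring_nf
      _ ≤ a ^ s * (s / (s - 1) * ((N : ℝ) + 1) ^ (1 - s)) := by
          rw [← mul_sum]
          gcongr
          exact sum_range_rpow_neg_add_le hs (by simp) n
  have hscale : a ^ s * ((N : ℝ) + 1) ^ (1 - s) ≤ a :=
    calc a ^ s * ((N : ℝ) + 1) ^ (1 - s) ≤ a ^ s * a ^ (1 - s) :=
          mul_le_mul_of_nonneg_left (rpow_le_rpow_of_nonpos ha hN1 (by linarith)) (by positivity)
      _ = a := by rw [← rpow_add ha, add_sub_cancel, rpow_one]
  have hs' : 0 ≤ s / (s - 1) := div_nonneg (by linarith) (by linarith)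
  calc ∑ j ∈ range n, min 1 ((a / (j + 1)) ^ s)
      ≤ ∑ j ∈ range (N + n), min 1 ((a / (j + 1)) ^ s) :=
        sum_le_sum_of_subset_of_nonneg (range_mono (by omega)) fun _ _ _ => by positivity
    _ = ∑ j ∈ range N, min 1 ((a / (j + 1)) ^ s)
          + ∑ i ∈ range n, min 1 ((a / ((N + i : ℕ) + 1)) ^ s) := sum_range_add _ _ _
    _ ≤ a + s / (s - 1) * a := by
        nlinarith
    _ = (1 + s / (s - 1)) * a := by ring

lemma div_add_le_min_one_div {μ lam : ℝ} (hμ : 0 ≤ μ) (hlam : 0 < lam) :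
    μ / (μ + lam) ≤ min 1 (μ / lam) :=
  le_min (div_le_one_of_le₀ (by linarith) (by positivity))
    (div_le_div_of_nonneg_left hμ hlam (by linarith))

theorem tsum_rpow_div_rpow_add_le {C s lam : ℝ} (hC : 0 < C) (hs : 1 < s) (hlam : 0 < lam) :
    ∑' j : ℕ, C * ((j : ℝ) + 1) ^ (-s) / (C * ((j : ℝ) + 1) ^ (-s) + lam)
      ≤ (1 + s / (s - 1)) * C ^ (1 / s) * lam ^ (-(1 / s)) := by
  set a := (C / lam) ^ (1 / s) with ha_def
  have ha : 0 < a := by positivity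
  have has : a ^ s = C / lam := by
    rw [ha_def, one_div, rpow_inv_rpow (by positivity) (by linarith)]
  have hterm (j : ℕ) : C * ((j : ℝ) + 1) ^ (-s) / lam = (a / (j + 1)) ^ s := by
    rw [div_rpow ha.le (by positivity), has, rpow_neg (by positivity)]
    ring
  calc _ ≤ (1 + s / (s - 1)) * a := by
        refine Real.tsum_le_of_sum_range_le (fun j => by positivity) fun n =>
          (sum_le_sum fun j _ => ?_).trans (sum_range_min_one_div_rpow_le hs ha n)
        rw [← hterm]
        exact div_add_le_min_one_div (by positivity) hlam
    _ = (1 + s / (s - 1)) * C ^ (1 / s) * lam ^ (-(1 / s)) := by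
        rw [ha_def, div_rpow hC.le hlam.le, rpow_neg hlam.le]
        ring

/-- Effective dimension bound for polynomially decaying eigenvalues:
if `μ j = C * j ^ (-2ℓ)` then `γ(λ) = ∑ μ_j/(μ_j+λ) ≤ C' * λ^(-1/(2ℓ))`
for a constant `C'` depending only on `C` and `ℓ`. -/
theorem stmt_0 (C : ℝ) (hC : 0 < C) (ℓ : ℕ) (hℓ : 1 ≤ ℓ) :
    ∃ C' : ℝ, ∀ lam : ℝ, 0 < lam →
      (∑' j : ℕ, (C * ((j : ℝ) + 1) ^ (-(2 * (ℓ : ℝ)))) /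
          (C * ((j : ℝ) + 1) ^ (-(2 * (ℓ : ℝ))) + lam))
        ≤ C' * lam ^ (-(1 / (2 * (ℓ : ℝ)))) := by
  have hs : 1 < 2 * (ℓ : ℝ) := by
    have : (1 : ℝ) ≤ ℓ := by exact_mod_cast hℓ
    linarith
  exact ⟨_, fun lam hlam => tsum_rpow_div_rpow_add_le hC hs hlam⟩
end

section
/- Suppose the eigenvalues satisfy $\mu_j \leq c_1 \exp(-c_2 j^2)$ for positive constants $c_1, c_2$. Then there exist constants $A, B > 0$ such that for all $0 < \lambda < 1$, $\gamma(\lambda) = \sum_{j=1}^\infty \mu_j/(\mu_j+\lambda) \leq A \sqrt{-\log \lambda} + B$. -/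
/-!
Bound each term `μ/(μ+λ)` by `1` for the first `N` indices and by `μ/λ` afterwards. Taking
`N ≈ √(log⁺(c₁/λ)/c₂)`, the point where `c₁ e^{-c₂ N²}` drops below `λ`, the tail is dominated by
`λ e^{-c₂ n}` because `(N + n)² ≥ N² + n`, so it contributes at most `1/(1 - e^{-c₂})`, while
`N ≤ √(log⁺ c₁ / c₂) + √(-log λ / c₂)`.
-/

open Real Finset

lemma Real.sqrt_add_le_sqrt_add_sqrt {x y : ℝ} (hx : 0 ≤ x) (hy : 0 ≤ y) :
    √(x + y) ≤ √x + √y := by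
  rw [Real.sqrt_le_iff]
  refine ⟨by positivity, ?_⟩
  nlinarith [Real.sq_sqrt hx, Real.sq_sqrt hy, mul_nonneg (Real.sqrt_nonneg x) (Real.sqrt_nonneg y)]

lemma tsum_div_add_le_of_tail_le {μ g : ℕ → ℝ} {lam : ℝ} (N : ℕ) (hμ0 : ∀ j, 0 ≤ μ j)
    (hlam : 0 < lam) (hg : Summable g) (htail : ∀ n, μ (n + N) ≤ lam * g n) :
    ∑' j, μ j / (μ j + lam) ≤ N + ∑' n, g n := by
  set f : ℕ → ℝ := fun j => μ j / (μ j + lam)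
  have hf_le_div : ∀ j, f j ≤ μ j / lam := fun j =>
    div_le_div_of_nonneg_left (hμ0 j) hlam (by linarith [hμ0 j])
  have hf_tail : ∀ n, f (n + N) ≤ g n := fun n =>
    (hf_le_div _).trans <| (div_le_iff₀' hlam).2 (htail n)
  have hf_nonneg : ∀ j, 0 ≤ f j := fun j => div_nonneg (hμ0 j) (by linarith [hμ0 j])
  have hf_summable : Summable f := (summable_nat_add_iff N).1 <|
    hg.of_nonneg_of_le (fun n => hf_nonneg _) hf_tail
  have hhead : ∑ j ∈ range N, f j ≤ N := by
    simpa using sum_le_card_nsmul (range N) f 1 fun j _ =>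
      div_le_one_of_le₀ (by linarith [hμ0 j]) (by linarith [hμ0 j])
  calc ∑' j, f j = ∑ j ∈ range N, f j + ∑' n, f (n + N) :=
        (hf_summable.sum_add_tsum_nat_add N).symm
    _ ≤ N + ∑' n, g n :=
        add_le_add hhead (((summable_nat_add_iff N).2 hf_summable).tsum_le_tsum hf_tail hg)

lemma exp_neg_mul_sq_add_nat_le {c x : ℝ} (hc : 0 ≤ c) (hx : 0 ≤ x) (n : ℕ) :
    exp (-c * (x + n) ^ 2) ≤ exp (-c * x ^ 2) * exp (-c) ^ n := by
  rw [← Real.exp_nat_mul, ← Real.exp_add, Real.exp_le_exp]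
  have hn : (n : ℝ) ≤ n ^ 2 := by
    rcases Nat.eq_zero_or_pos n with rfl | hn
    · simp
    · nlinarith [(Nat.one_le_cast (α := ℝ)).2 hn]
  have hsq : x ^ 2 + n ≤ (x + n) ^ 2 := by nlinarith [mul_nonneg hx (Nat.cast_nonneg (α := ℝ) n)]
  nlinarith [mul_le_mul_of_nonneg_left hsq hc]

lemma mul_exp_neg_mul_sq_le {c₁ c₂ lam x : ℝ} (hc₁ : 0 < c₁) (hc₂ : 0 < c₂) (hlam : 0 < lam)
    (hx : √(log⁺ (c₁ / lam) / c₂) ≤ x) : c₁ * exp (-c₂ * x ^ 2) ≤ lam := by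
  have hlog : log (c₁ / lam) ≤ c₂ * x ^ 2 := by
    have := (Real.sqrt_le_iff.1 hx).2
    rw [div_le_iff₀ hc₂] at this
    linarith [posLog_apply (x := c₁ / lam) ▸ le_max_right 0 (log (c₁ / lam))]
  rw [Real.log_le_iff_le_exp (by positivity), div_le_iff₀' hlam] at hlog
  calc c₁ * exp (-c₂ * x ^ 2) ≤ lam * exp (c₂ * x ^ 2) * exp (-c₂ * x ^ 2) := by gcongr
    _ = lam := by rw [mul_assoc, ← Real.exp_add]; simp

lemma sqrt_posLog_div_le {c₁ c lam : ℝ} (hc : 0 < c) (hlam : 0 < lam) (hlam1 : lam < 1) :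
    √(log⁺ (c₁ / lam) / c) ≤ √(log⁺ c₁ / c) + (√c)⁻¹ * √(-log lam) := by
  have hL : 0 ≤ -log lam := by linarith [Real.log_neg hlam hlam1]
  have hsplit : log⁺ (c₁ / lam) ≤ log⁺ c₁ + -log lam := by
    calc log⁺ (c₁ / lam) ≤ log⁺ c₁ + log⁺ lam⁻¹ := posLog_mul
      _ = log⁺ c₁ + -log lam := by rw [posLog_apply (x := lam⁻¹), Real.log_inv, max_eq_right hL]
  calc √(log⁺ (c₁ / lam) / c) ≤ √(log⁺ c₁ / c + -log lam / c) := by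
        rw [← add_div]; gcongr
    _ ≤ √(log⁺ c₁ / c) + √(-log lam / c) :=
        Real.sqrt_add_le_sqrt_add_sqrt (div_nonneg posLog_nonneg hc.le) (div_nonneg hL hc.le)
    _ = √(log⁺ c₁ / c) + (√c)⁻¹ * √(-log lam) := by
        rw [Real.sqrt_div hL]; ring

/-- For sub-Gaussian eigenvalue decay `μ_j ≤ c₁ exp(-c₂ j²)` the effective
dimension satisfies `γ(λ) ≤ A √(-log λ) + B` for all `0 < λ < 1`. -/
theorem stmt_2 (c₁ c₂ : ℝ) (hc₁ : 0 < c₁) (hc₂ : 0 < c₂)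
    (μ : ℕ → ℝ) (hμ0 : ∀ j, 0 ≤ μ j)
    (hμ : ∀ j : ℕ, 1 ≤ j → μ j ≤ c₁ * Real.exp (-c₂ * (j : ℝ) ^ 2)) :
    ∃ A B : ℝ, 0 < A ∧ 0 < B ∧ ∀ lam : ℝ, 0 < lam → lam < 1 →
      (∑' j : ℕ, μ (j + 1) / (μ (j + 1) + lam))
        ≤ A * Real.sqrt (-Real.log lam) + B := by
  set r := exp (-c₂)
  have hr1 : r < 1 := Real.exp_lt_one_iff.2 (by linarith)
  have hr0 : 0 < 1 - r := by linarith
  refine ⟨(√c₂)⁻¹, √(log⁺ c₁ / c₂) + (1 - r)⁻¹, by positivity, by positivity,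
    fun lam hlam hlam1 => ?_⟩
  set t := √(log⁺ (c₁ / lam) / c₂)
  set N := ⌊t⌋₊
  have hcut : c₁ * exp (-c₂ * ((N : ℝ) + 1) ^ 2) ≤ lam :=
    mul_exp_neg_mul_sq_le hc₁ hc₂ hlam (Nat.lt_floor_add_one t).le
  have htail : ∀ n, μ (n + N + 1) ≤ lam * r ^ n := fun n => by
    calc μ (n + N + 1) ≤ c₁ * exp (-c₂ * (((N : ℝ) + 1) + n) ^ 2) := by
          convert hμ (n + N + 1) (by omega) using 4; push_cast; ring
      _ ≤ c₁ * (exp (-c₂ * ((N : ℝ) + 1) ^ 2) * r ^ n) := by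
          gcongr; exact exp_neg_mul_sq_add_nat_le hc₂.le (by positivity) n
      _ ≤ lam * r ^ n := by rw [← mul_assoc]; gcongr
  calc ∑' j, μ (j + 1) / (μ (j + 1) + lam) ≤ N + ∑' n, r ^ n :=
        tsum_div_add_le_of_tail_le N (fun j => hμ0 _) hlam
          (summable_geometric_of_lt_one (Real.exp_pos _).le hr1) htail
    _ ≤ t + (1 - r)⁻¹ := by
        rw [tsum_geometric_of_lt_one (Real.exp_pos _).le hr1]
        gcongr
        exact Nat.floor_le (Real.sqrt_nonneg _)
    _ ≤ (√c₂)⁻¹ * √(-log lam) + (√(log⁺ c₁ / c₂) + (1 - r)⁻¹) := by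
        linarith [sqrt_posLog_div_le (c₁ := c₁) hc₂ hlam hlam1]
end
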